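/- If a bipartite density matrix ρ on ℂ^{d_A} ⊗ ℂ^{d_B} is separable, then the Ky Fan (trace) norm of its correlation matrix satisfies ‖M‖_KF ≤ √((d_A − 1)(d_B − 1)). -/

import Mathlib

open scoped Matrix ComplexOrder Kronecker

/-- The Weyl operator `W_{n m}` on a `d`-dimensional Hilbert space:
`(W_{n m})_{k, k'} = exp(2πi·k·n/d)` if `k' = k + m` (mod `d`), and `0` otherwise. -/
noncomputable def Weyl (d : ℕ) (n m : ZMod d) : Matrix (ZMod d) (ZMod d) ℂ :=
  Matrix.of fun k k' =>
    if k' = k + m then Complex.exp (2 * Real.pi * Complex.I * (k.val * n.val : ℕ) / d) else 0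

/-- The positive semidefinite square root of a positive semidefinite matrix
(the definition removed from Mathlib, restated with its old meaning). -/
noncomputable def Matrix.PosSemidef.sqrt {n 𝕜 : Type*} [Fintype n] [DecidableEq n] [RCLike 𝕜]
    {A : Matrix n n 𝕜} (hA : A.PosSemidef) : Matrix n n 𝕜 :=
  hA.1.eigenvectorUnitary.1 * Matrix.diagonal ((↑) ∘ (√·) ∘ hA.1.eigenvalues) *
  (star hA.1.eigenvectorUnitary : Matrix n n 𝕜)

/-- The Ky Fan (trace) norm `‖M‖_KF = Tr √(M†M)`, the sum of the singular values of `M`. -/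
noncomputable def kyFanNorm {m n : Type*} [Fintype m] [Fintype n] [DecidableEq n]
    (M : Matrix m n ℂ) : ℝ :=
  (Matrix.trace (Matrix.posSemidef_conjTranspose_mul_self M).sqrt).re

/-- A bipartite density matrix is separable if it is a finite convex combination of
Kronecker products of density matrices. -/
def SeparableState (dA dB : ℕ) [NeZero dA] [NeZero dB]
    (ρ : Matrix (ZMod dA × ZMod dB) (ZMod dA × ZMod dB) ℂ) : Prop :=
  ∃ (N : ℕ) (w : Fin N → ℝ) (A : Fin N → Matrix (ZMod dA) (ZMod dA) ℂ)
      (B : Fin N → Matrix (ZMod dB) (ZMod dB) ℂ),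
    (∀ s, 0 ≤ w s) ∧ (∑ s, w s) = 1 ∧
    (∀ s, (A s).PosSemidef ∧ (A s).trace = 1) ∧
    (∀ s, (B s).PosSemidef ∧ (B s).trace = 1) ∧
    ρ = ∑ s, (w s : ℂ) • (A s ⊗ₖ B s)

/-- The correlation matrix of a bipartite state relative to the Weyl basis:
`M_{(i,j),(k,l)} = Tr(ρ · (W_{ij}^† ⊗ W_{kl}^†))` for `(i,j) ≠ 0`, `(k,l) ≠ 0`. -/
noncomputable def corrMatrix (dA dB : ℕ) [NeZero dA] [NeZero dB]
    (ρ : Matrix (ZMod dA × ZMod dB) (ZMod dA × ZMod dB) ℂ) :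
    Matrix {p : ZMod dA × ZMod dA // p ≠ 0} {q : ZMod dB × ZMod dB // q ≠ 0} ℂ :=
  Matrix.of fun p q =>
    Matrix.trace (ρ * ((Weyl dA p.1.1 p.1.2)ᴴ ⊗ₖ (Weyl dB q.1.1 q.1.2)ᴴ))

/-! A separable state is a convex combination of products `A ⊗ B`, and the correlation matrix of
`A ⊗ B` is the rank-one matrix `a bᵀ` of the coefficients of `A` and `B` along the traceless Weyl
operators. For fixed `m`, `n ↦ Tr(X W_{nm}†)` is the discrete Fourier transform of
`a ↦ X a (a + m)`, so Parseval gives `∑ₚ |Tr(X W_p†)|² = d ∑ |X a b|² ≤ d (Tr X)²`, the last step by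
the `2 × 2` principal minors of `X ≥ 0`; dropping the term `p = 0`, which is `|Tr X|² = 1`, leaves
`‖a‖² ≤ d - 1`. Finally, writing `‖M‖_KF = ∑ₖ ⟪uₖ, M vₖ⟫` with orthonormal singular vectors,
Cauchy–Schwarz and Bessel's inequality give `‖∑ₛ xₛ yₛᵀ‖_KF ≤ ∑ₛ ‖xₛ‖ ‖yₛ‖`. -/

open scoped InnerProductSpace
open Finset Matrix ZMod

lemma ZMod.sum_norm_sq_dft {N : ℕ} [NeZero N] (Φ : ZMod N → ℂ) :
    ∑ k, ‖𝓕 Φ k‖ ^ 2 = N * ∑ j, ‖Φ j‖ ^ 2 := by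
  classical
  have orthogonality (j j' : ZMod N) :
      ∑ k, stdAddChar (-(j * k)) * starRingEnd ℂ (stdAddChar (-(j' * k))) =
        if j = j' then (N : ℂ) else 0 := by
    simp_rw [stdAddChar_apply, ← Circle.coe_inv_eq_conj, ← Circle.coe_mul,
      ← AddChar.map_neg_eq_inv, ← AddChar.map_add_eq_mul, ← stdAddChar_apply]
    convert AddChar.sum_mulShift (j' - j) (isPrimitive_stdAddChar N) using 2 with k
    · ring_nf
    · simp [sub_eq_zero, eq_comm]
  apply Complex.ofReal_injective
  push_cast
  simp_rw [← Complex.mul_conj', dft_apply, smul_eq_mul, map_sum, map_mul, sum_mul_sum, mul_sum]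
  rw [sum_comm]
  refine sum_congr rfl fun j _ ↦ ?_
  rw [sum_comm]
  calc ∑ j', ∑ k, stdAddChar (-(j * k)) * Φ j *
        (starRingEnd ℂ (stdAddChar (-(j' * k))) * starRingEnd ℂ (Φ j'))
      = ∑ j', (if j = j' then (N : ℂ) else 0) * (Φ j * starRingEnd ℂ (Φ j')) := by
        refine sum_congr rfl fun j' _ ↦ ?_
        rw [← orthogonality, sum_mul]
        exact sum_congr rfl fun k _ ↦ by ring
    _ = N * (Φ j * starRingEnd ℂ (Φ j)) := by simp

lemma Matrix.PosSemidef.norm_sq_apply_le {n : Type*} [Fintype n] {X : Matrix n n ℂ}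
    (hX : X.PosSemidef) (a b : n) : ‖X a b‖ ^ 2 ≤ (X a a).re * (X b b).re := by
  have hminor := (hX.submatrix ![a, b]).det_nonneg
  rw [det_fin_two, Complex.nonneg_iff] at hminor
  have hba : X b a = starRingEnd ℂ (X a b) := (hX.1.apply b a).symm
  have hdiag (i : n) : (X i i).im = 0 := by
    rw [← hX.1.coe_re_apply_self i]
    exact Complex.ofReal_im _
  simp only [submatrix_apply, cons_val_zero, cons_val_one, hba, Complex.mul_conj',
    Complex.sub_re, Complex.mul_re, hdiag] at hminor
  norm_cast at hminor
  linarith [hminor.1]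

lemma Matrix.PosSemidef.sum_norm_sq_apply_le {n : Type*} [Fintype n] {X : Matrix n n ℂ}
    (hX : X.PosSemidef) : ∑ a, ∑ b, ‖X a b‖ ^ 2 ≤ X.trace.re ^ 2 := by
  rw [sq, trace, Complex.re_sum, sum_mul_sum]
  exact sum_le_sum fun a _ ↦ sum_le_sum fun b _ ↦ hX.norm_sq_apply_le a b

lemma Matrix.PosSemidef.trace_sqrt {n 𝕜 : Type*} [Fintype n] [DecidableEq n] [RCLike 𝕜]
    {A : Matrix n n 𝕜} (hA : A.PosSemidef) :
    hA.sqrt.trace = ∑ i, ((√(hA.1.eigenvalues i) : ℝ) : 𝕜) := by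
  rw [PosSemidef.sqrt, trace_mul_cycle, Unitary.coe_star_mul_self, one_mul, trace_diagonal]
  rfl

lemma Orthonormal.norm_sum_inner_mul_inner_le {𝕜 E F ι : Type*} [RCLike 𝕜]
    [SeminormedAddCommGroup E] [InnerProductSpace 𝕜 E] [SeminormedAddCommGroup F]
    [InnerProductSpace 𝕜 F] [Fintype ι] {u : ι → E} {v : ι → F} (hu : Orthonormal 𝕜 u)
    (hv : Orthonormal 𝕜 v) (x : E) (y : F) :
    ‖∑ i, ⟪u i, x⟫_𝕜 * ⟪y, v i⟫_𝕜‖ ≤ ‖x‖ * ‖y‖ :=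
  calc ‖∑ i, ⟪u i, x⟫_𝕜 * ⟪y, v i⟫_𝕜‖ ≤ ∑ i, ‖⟪u i, x⟫_𝕜‖ * ‖⟪v i, y⟫_𝕜‖ := by
        simpa only [norm_mul, norm_inner_symm y] using
          norm_sum_le univ fun i ↦ ⟪u i, x⟫_𝕜 * ⟪y, v i⟫_𝕜
    _ ≤ √(∑ i, ‖⟪u i, x⟫_𝕜‖ ^ 2) * √(∑ i, ‖⟪v i, y⟫_𝕜‖ ^ 2) :=
        Real.sum_mul_le_sqrt_mul_sqrt _ _ _
    _ ≤ √(‖x‖ ^ 2) * √(‖y‖ ^ 2) := by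
        gcongr
        exacts [hu.sum_inner_products_le x, hv.sum_inner_products_le y]
    _ = ‖x‖ * ‖y‖ := by rw [Real.sqrt_sq (norm_nonneg x), Real.sqrt_sq (norm_nonneg y)]

section EuclideanSpace
variable {𝕜 I J : Type*} [RCLike 𝕜] [Fintype I] [Fintype J]

lemma inner_toLp_mulVec_toLp_mulVec (M : Matrix I J 𝕜) (a b : J → 𝕜) :
    ⟪WithLp.toLp 2 (M *ᵥ a), WithLp.toLp 2 (M *ᵥ b)⟫_𝕜 =
      ⟪WithLp.toLp 2 a, WithLp.toLp 2 ((Mᴴ * M) *ᵥ b)⟫_𝕜 := by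
  simp only [EuclideanSpace.inner_toLp_toLp, star_mulVec, ← mulVec_mulVec]
  rw [dotProduct_comm, ← dotProduct_mulVec, dotProduct_comm]

lemma inner_toLp_vecMulVec_mulVec (u : EuclideanSpace 𝕜 I) (x : I → 𝕜) (y b : J → 𝕜) :
    ⟪u, WithLp.toLp 2 (vecMulVec x y *ᵥ b)⟫_𝕜 =
      ⟪u, WithLp.toLp 2 x⟫_𝕜 * ⟪WithLp.toLp 2 (star y), WithLp.toLp 2 b⟫_𝕜 := by
  rw [vecMulVec_mulVec, op_smul_eq_smul, WithLp.toLp_smul, inner_smul_right, mul_comm,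
    EuclideanSpace.inner_toLp_toLp (star y), star_star, dotProduct_comm]

lemma norm_toLp_star (y : J → 𝕜) : ‖WithLp.toLp 2 (star y)‖ = ‖WithLp.toLp 2 y‖ := by
  simp [EuclideanSpace.norm_eq]

end EuclideanSpace

section KyFan
variable {I J : Type*} [Fintype I] [Fintype J] [DecidableEq J]

lemma kyFanNorm_eq_sum_sqrt_eigenvalues (M : Matrix I J ℂ) :
    kyFanNorm M = ∑ j, √((posSemidef_conjTranspose_mul_self M).1.eigenvalues j) := by
  rw [kyFanNorm, PosSemidef.trace_sqrt, Complex.re_sum]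
  rfl

theorem exists_orthonormal_kyFanNorm_eq_sum_inner (M : Matrix I J ℂ) :
    ∃ (K : Finset J) (u : K → EuclideanSpace ℂ I) (v : K → EuclideanSpace ℂ J),
      Orthonormal ℂ u ∧ Orthonormal ℂ v ∧
      (kyFanNorm M : ℂ) = ∑ k, ⟪u k, WithLp.toLp 2 (M *ᵥ v k)⟫_ℂ := by
  have hH := (posSemidef_conjTranspose_mul_self M).1
  set σ : J → ℝ := fun j ↦ √(hH.eigenvalues j)
  have hσ_sq (j : J) : σ j ^ 2 = hH.eigenvalues j :=
    Real.sq_sqrt (eigenvalues_conjTranspose_mul_self_nonneg M j)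
  let e := hH.eigenvectorBasis
  have inner_image (i j : J) : ⟪WithLp.toLp 2 (M *ᵥ e i), WithLp.toLp 2 (M *ᵥ e j)⟫_ℂ =
      hH.eigenvalues j * ⟪e i, e j⟫_ℂ := by
    rw [inner_toLp_mulVec_toLp_mulVec, hH.mulVec_eigenvectorBasis, ← inner_smul_right]
    rfl
  refine ⟨({j | σ j ≠ 0} : Finset J), fun k ↦ (σ k : ℂ)⁻¹ • WithLp.toLp 2 (M *ᵥ e k), fun k ↦ e k, ?_,
    e.orthonormal.comp _ Subtype.val_injective, ?_⟩
  · rw [orthonormal_iff_ite]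
    rintro ⟨i, hi⟩ ⟨j, hj⟩
    simp only [mem_filter, mem_univ, true_and] at hi hj
    simp only [inner_smul_left, inner_smul_right, inner_image,
      orthonormal_iff_ite.mp e.orthonormal i j, Subtype.mk.injEq]
    split_ifs with hij
    · subst hij
      rw [← hσ_sq, map_inv₀, Complex.conj_ofReal]
      push_cast
      field_simp
    · simp
  · rw [kyFanNorm_eq_sum_sqrt_eigenvalues, ← sum_filter_ne_zero, ← sum_coe_sort]
    push_cast
    refine sum_congr rfl fun ⟨k, hk⟩ _ ↦ ?_
    simp only [mem_filter, mem_univ, true_and] at hk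
    change (σ k : ℂ) = _
    simp only [inner_smul_left, inner_image, inner_self_eq_one_of_norm_eq_one (e.orthonormal.1 k),
      map_inv₀, Complex.conj_ofReal, ← hσ_sq]
    push_cast
    field_simp

theorem kyFanNorm_sum_vecMulVec_le {S : Type*} [Fintype S] (x : S → I → ℂ) (y : S → J → ℂ) :
    kyFanNorm (∑ s, vecMulVec (x s) (y s)) ≤
      ∑ s, ‖WithLp.toLp 2 (x s)‖ * ‖WithLp.toLp 2 (y s)‖ := by
  obtain ⟨K, u, v, hu, hv, hM⟩ :=
    exists_orthonormal_kyFanNorm_eq_sum_inner (∑ s, vecMulVec (x s) (y s))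
  calc kyFanNorm (∑ s, vecMulVec (x s) (y s))
      = (∑ s, ∑ k, ⟪u k, WithLp.toLp 2 (x s)⟫_ℂ * ⟪WithLp.toLp 2 (star (y s)), v k⟫_ℂ).re := by
        rw [← Complex.ofReal_re (kyFanNorm _), hM, sum_comm]
        simp only [sum_mulVec, WithLp.toLp_sum, inner_sum, inner_toLp_vecMulVec_mulVec]
    _ ≤ ∑ s, ‖∑ k, ⟪u k, WithLp.toLp 2 (x s)⟫_ℂ * ⟪WithLp.toLp 2 (star (y s)), v k⟫_ℂ‖ := by
        rw [Complex.re_sum]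
        exact sum_le_sum fun s _ ↦ Complex.re_le_norm _
    _ ≤ ∑ s, ‖WithLp.toLp 2 (x s)‖ * ‖WithLp.toLp 2 (y s)‖ := by
        refine sum_le_sum fun s _ ↦ ?_
        rw [← norm_toLp_star (y s)]
        exact hu.norm_sum_inner_mul_inner_le hv _ _

end KyFan

noncomputable def weylCoeffs (d : ℕ) [NeZero d] (X : Matrix (ZMod d) (ZMod d) ℂ)
    (p : {p : ZMod d × ZMod d // p ≠ 0}) : ℂ :=
  (X * (Weyl d p.1.1 p.1.2)ᴴ).trace

section Weyl
variable {d : ℕ} [NeZero d]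

lemma Weyl_apply (n m k k' : ZMod d) :
    Weyl d n m k k' = if k' = k + m then (stdAddChar (k * n) : ℂ) else 0 := by
  have : ((k.val * n.val : ℕ) : ZMod d) = k * n := by simp
  rw [stdAddChar_apply, ← this, toCircle_natCast]
  rfl

lemma Weyl_zero_zero : Weyl d 0 0 = 1 := by
  ext k k'
  simp [Weyl_apply, one_apply, eq_comm]

lemma trace_mul_conjTranspose_Weyl (X : Matrix (ZMod d) (ZMod d) ℂ) (n m : ZMod d) :
    (X * (Weyl d n m)ᴴ).trace = 𝓕 (fun a ↦ X a (a + m)) n := by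
  simp [trace, mul_apply, Weyl_apply, dft_apply, apply_ite, stdAddChar_apply,
    ← Circle.coe_inv_eq_conj, ← AddChar.map_neg_eq_inv, mul_comm]

lemma sum_norm_sq_trace_mul_conjTranspose_Weyl (X : Matrix (ZMod d) (ZMod d) ℂ) :
    ∑ p : ZMod d × ZMod d, ‖(X * (Weyl d p.1 p.2)ᴴ).trace‖ ^ 2 = d * ∑ a, ∑ b, ‖X a b‖ ^ 2 := by
  simp_rw [Fintype.sum_prod_type, trace_mul_conjTranspose_Weyl]
  rw [sum_comm]
  simp_rw [sum_norm_sq_dft, ← mul_sum]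
  rw [sum_comm]
  congr 1
  exact sum_congr rfl fun a _ ↦ Fintype.sum_equiv (Equiv.addLeft a) _ _ fun _ ↦ rfl

lemma norm_weylCoeffs_le {X : Matrix (ZMod d) (ZMod d) ℂ} (hX : X.PosSemidef)
    (htr : X.trace = 1) : ‖WithLp.toLp 2 (weylCoeffs d X)‖ ≤ √(d - 1) := by
  classical
  have parseval := sum_norm_sq_trace_mul_conjTranspose_Weyl X
  rw [Fintype.sum_eq_add_sum_subtype_ne _ 0] at parseval
  simp only [Prod.fst_zero, Prod.snd_zero, Weyl_zero_zero, conjTranspose_one, mul_one, htr,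
    norm_one, one_pow] at parseval
  have purity := hX.sum_norm_sq_apply_le
  rw [htr, Complex.one_re, one_pow] at purity
  have := mul_le_mul_of_nonneg_left purity (Nat.cast_nonneg (α := ℝ) d)
  rw [EuclideanSpace.norm_eq]
  gcongr
  simp only [weylCoeffs]
  linarith

end Weyl

lemma corrMatrix_sum_smul_kronecker {dA dB : ℕ} [NeZero dA] [NeZero dB] {S : Type*} [Fintype S]
    (c : S → ℂ) (A : S → Matrix (ZMod dA) (ZMod dA) ℂ) (B : S → Matrix (ZMod dB) (ZMod dB) ℂ) :
    corrMatrix dA dB (∑ s, c s • (A s ⊗ₖ B s)) =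
      ∑ s, vecMulVec (c s • weylCoeffs dA (A s)) (weylCoeffs dB (B s)) := by
  ext p q
  simp only [corrMatrix, of_apply, sum_mul, trace_sum, smul_mul_assoc, trace_smul,
    ← mul_kronecker_mul, trace_kronecker, Matrix.sum_apply, vecMulVec_apply, weylCoeffs,
    Pi.smul_apply, smul_eq_mul, mul_assoc]

theorem separable_corr_kyfan_le_general (dA dB : ℕ) [NeZero dA] [NeZero dB]
    (ρ : Matrix (ZMod dA × ZMod dB) (ZMod dA × ZMod dB) ℂ)
    (hsep : SeparableState dA dB ρ) :
    kyFanNorm (corrMatrix dA dB ρ) ≤ Real.sqrt (((dA : ℝ) - 1) * ((dB : ℝ) - 1)) := by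
  obtain ⟨N, w, A, B, hw, hw_sum, hA_state, hB_state, rfl⟩ := hsep
  have hdA : (0 : ℝ) ≤ dA - 1 := by simpa using NeZero.one_le (n := dA)
  rw [corrMatrix_sum_smul_kronecker]
  calc kyFanNorm (∑ s, vecMulVec ((w s : ℂ) • weylCoeffs dA (A s)) (weylCoeffs dB (B s)))
      ≤ ∑ s, ‖WithLp.toLp 2 ((w s : ℂ) • weylCoeffs dA (A s))‖ *
          ‖WithLp.toLp 2 (weylCoeffs dB (B s))‖ := kyFanNorm_sum_vecMulVec_le _ _
    _ ≤ ∑ s, w s * (√(dA - 1) * √(dB - 1)) := by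
        refine sum_le_sum fun s _ ↦ ?_
        rw [WithLp.toLp_smul, norm_smul, Complex.norm_real, Real.norm_of_nonneg (hw s), mul_assoc]
        gcongr
        exacts [hw s, norm_weylCoeffs_le (hA_state s).1 (hA_state s).2,
          norm_weylCoeffs_le (hB_state s).1 (hB_state s).2]
    _ = √((dA - 1) * (dB - 1)) := by rw [← sum_mul, hw_sum, one_mul, Real.sqrt_mul hdA]

/-- if a bipartite density matrix `ρ` is separable, then the Ky Fan norm
of its correlation matrix satisfies `‖M‖_KF ≤ √((d_A − 1)(d_B − 1))`. -/
theorem separable_corr_kyfan_le (dA dB : ℕ) [NeZero dA] [NeZero dB]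
    (hA : 2 ≤ dA) (hB : 2 ≤ dB)
    (ρ : Matrix (ZMod dA × ZMod dB) (ZMod dA × ZMod dB) ℂ)
    (hpsd : ρ.PosSemidef) (htr : ρ.trace = 1)
    (hsep : SeparableState dA dB ρ) :
    kyFanNorm (corrMatrix dA dB ρ) ≤ Real.sqrt (((dA : ℝ) - 1) * ((dB : ℝ) - 1)) :=
  separable_corr_kyfan_le_general dA dB ρ hsep
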